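/- arXiv:1705.09632 — 4 statements merged into one kernel-verified Lean document; each statement's English description precedes it below -/
import Mathlib

section
/- For every x ∈ ℝ³ and every direction v ∈ ℝ³, the pull-backs of the Maurer–Cartan form by H and G are related by H(x)⁻¹·DH(x)[v] = G(x)⁻¹·DG(x)[v] + G(x)⁻¹·(G(x)⁻¹·DG(x)[v])·G(x). -/
open Matrix Complex

noncomputable section

attribute [local instance] Matrix.normedAddCommGroup Matrix.normedSpace

/-- The Pauli matrices τ₁, τ₂, τ₃. -/
def pauli : Fin 3 → Matrix (Fin 2) (Fin 2) ℂ :=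
  ![!![0, 1; 1, 0], !![0, -I; I, 0], !![1, 0; 0, -1]]

/-- The Pauli vector x·τ = x₁τ₁ + x₂τ₂ + x₃τ₃ for x ∈ ℝ³. -/
def pauliVec (x : EuclideanSpace ℝ (Fin 3)) : Matrix (Fin 2) (Fin 2) ℂ :=
  (x 0 : ℂ) • pauli 0 + (x 1 : ℂ) • pauli 1 + (x 2 : ℂ) • pauli 2

/-- G(x) = (ℓ·I + i x·τ)/√(ℓ² + r²), the inverse gnomonic projection. -/
def Gmap (ℓ : ℝ) (x : EuclideanSpace ℝ (Fin 3)) : Matrix (Fin 2) (Fin 2) ℂ :=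
  (((Real.sqrt (ℓ ^ 2 + ‖x‖ ^ 2))⁻¹ : ℝ) : ℂ) •
    ((ℓ : ℂ) • (1 : Matrix (Fin 2) (Fin 2) ℂ) + I • pauliVec x)

/-- H(x) = ((ℓ² − r²)·I + 2iℓ x·τ)/(ℓ² + r²), the inverse stereographic projection. -/
def Hmap (ℓ : ℝ) (x : EuclideanSpace ℝ (Fin 3)) : Matrix (Fin 2) (Fin 2) ℂ :=
  ((((ℓ ^ 2 + ‖x‖ ^ 2))⁻¹ : ℝ) : ℂ) •
    (((ℓ ^ 2 - ‖x‖ ^ 2 : ℝ) : ℂ) • (1 : Matrix (Fin 2) (Fin 2) ℂ)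
      + ((2 * ℓ : ℝ) : ℂ) • I • pauliVec x)

/-!
Expanding the square with `(x·τ)² = r²` shows `H = G * G`. The product rule gives
`DH = G·DG + DG·G`, and `H⁻¹ = G⁻¹G⁻¹` with `G⁻¹G = 1` because `det G = 1`; multiplying out
`H⁻¹·DH` gives the identity.
-/

namespace Matrix

variable {𝕜 n α E : Type*} [NontriviallyNormedField 𝕜] [CompleteSpace 𝕜]
  [Fintype n] [DecidableEq n] [NormedRing α] [NormedAlgebra 𝕜 α] [FiniteDimensional 𝕜 α]
  [NormedAddCommGroup E] [NormedSpace 𝕜 E]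

-- The entrywise sup norm is not submultiplicative, so `ContinuousLinearMap.mul` is unavailable;
-- continuity of matrix multiplication comes from finite dimensionality instead.
def mulCLM : Matrix n n α →L[𝕜] Matrix n n α →L[𝕜] Matrix n n α :=
  LinearMap.toContinuousLinearMap
    (LinearMap.toContinuousLinearMap.toLinearMap ∘ₗ LinearMap.mul 𝕜 (Matrix n n α))

theorem fderiv_mul_apply {f g : E → Matrix n n α} {x : E} (hf : DifferentiableAt 𝕜 f x)
    (hg : DifferentiableAt 𝕜 g x) (v : E) :
    fderiv 𝕜 (fun y => f y * g y) x v = f x * fderiv 𝕜 g x v + fderiv 𝕜 f x v * g x :=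
  DFunLike.congr_fun (mulCLM.fderiv_of_bilinear hf hg) v

theorem mul_self_inv_mul_anticomm {R : Type*} [CommRing R] {A : Matrix n n R}
    (hA : IsUnit A.det) (D : Matrix n n R) :
    (A * A)⁻¹ * (A * D + D * A) = A⁻¹ * D + A⁻¹ * (A⁻¹ * D) * A := by
  rw [mul_inv_rev, mul_add, mul_assoc, nonsing_inv_mul_cancel_left _ _ hA]
  simp only [Matrix.mul_assoc]

end Matrix

theorem Real.inv_sqrt_sq {s : ℝ} (hs : 0 ≤ s) : (√s)⁻¹ ^ 2 = s⁻¹ := by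
  rw [inv_pow, Real.sq_sqrt hs]

lemma EuclideanSpace.norm_sq_eq_fin_three (x : EuclideanSpace ℝ (Fin 3)) :
    ‖x‖ ^ 2 = x 0 ^ 2 + x 1 ^ 2 + x 2 ^ 2 := by
  simp [EuclideanSpace.norm_sq_eq, Fin.sum_univ_three]

lemma pauliVec_eq (x : EuclideanSpace ℝ (Fin 3)) :
    pauliVec x = !![(x 2 : ℂ), x 0 - x 1 * I; x 0 + x 1 * I, -(x 2 : ℂ)] := by
  simp [pauliVec, pauli]
  ring

lemma pauliVec_mul_self (x : EuclideanSpace ℝ (Fin 3)) :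
    pauliVec x * pauliVec x = ((‖x‖ ^ 2 : ℝ) : ℂ) • 1 := by
  rw [pauliVec_eq, EuclideanSpace.norm_sq_eq_fin_three]
  ext i j
  fin_cases i <;> fin_cases j <;> simp [Matrix.mul_apply] <;> ring_nf <;> simp [I_sq]

lemma det_smul_one_add_I_smul_pauliVec (a : ℝ) (x : EuclideanSpace ℝ (Fin 3)) :
    ((a : ℂ) • 1 + I • pauliVec x).det = ((a ^ 2 + ‖x‖ ^ 2 : ℝ) : ℂ) := by
  rw [pauliVec_eq, EuclideanSpace.norm_sq_eq_fin_three, det_fin_two]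
  simp
  ring_nf
  simp [I_sq]

lemma differentiable_pauliVec : Differentiable ℝ pauliVec := by
  unfold pauliVec
  fun_prop

lemma Hmap_eq_mul_self (ℓ : ℝ) (x : EuclideanSpace ℝ (Fin 3)) :
    Hmap ℓ x = Gmap ℓ x * Gmap ℓ x := by
  rw [Gmap, smul_mul_smul_comm, ← ofReal_mul, ← sq, Real.inv_sqrt_sq (by positivity), Hmap]
  congr 1
  simp only [add_mul, mul_add, smul_mul_smul_comm, one_mul, mul_one, pauliVec_mul_self, I_mul_I]
  match_scalars <;> ring

lemma det_Gmap {ℓ : ℝ} {x : EuclideanSpace ℝ (Fin 3)} (h : 0 < ℓ ^ 2 + ‖x‖ ^ 2) :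
    (Gmap ℓ x).det = 1 := by
  rw [Gmap, det_smul, det_smul_one_add_I_smul_pauliVec, Fintype.card_fin, ← ofReal_pow,
    Real.inv_sqrt_sq h.le, ← ofReal_mul, inv_mul_cancel₀ h.ne', ofReal_one]

lemma differentiableAt_Gmap {ℓ : ℝ} {x : EuclideanSpace ℝ (Fin 3)} (h : 0 < ℓ ^ 2 + ‖x‖ ^ 2) :
    DifferentiableAt ℝ (Gmap ℓ) x := by
  have hc : DifferentiableAt ℝ (fun y : EuclideanSpace ℝ (Fin 3) => (√(ℓ ^ 2 + ‖y‖ ^ 2))⁻¹) x :=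
    (((differentiableAt_const _).add (differentiableAt_id.norm_sq ℝ)).sqrt h.ne').inv
      (Real.sqrt_ne_zero'.2 h)
  exact ((Complex.differentiable_ofReal _).comp x hc).smul
    ((differentiableAt_const _).add ((differentiable_pauliVec x).const_smul I))

/-- the pull-backs of the Maurer–Cartan form by H and G are related by
H⁻¹dH = G⁻¹dG + G⁻¹(G⁻¹dG)G. -/
theorem Hinv_dH_eq_Ginv_dG_add_conj (ℓ : ℝ) (hℓ : 0 < ℓ)
    (x v : EuclideanSpace ℝ (Fin 3)) :
    (Hmap ℓ x)⁻¹ * fderiv ℝ (Hmap ℓ) x v =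
      (Gmap ℓ x)⁻¹ * fderiv ℝ (Gmap ℓ) x v +
        (Gmap ℓ x)⁻¹ * ((Gmap ℓ x)⁻¹ * fderiv ℝ (Gmap ℓ) x v) * Gmap ℓ x := by
  have hs : 0 < ℓ ^ 2 + ‖x‖ ^ 2 := by positivity
  have hG := differentiableAt_Gmap hs
  rw [show Hmap ℓ = fun y => Gmap ℓ y * Gmap ℓ y from funext (Hmap_eq_mul_self ℓ),
    Matrix.fderiv_mul_apply hG hG]
  exact Matrix.mul_self_inv_mul_anticomm (by simp [det_Gmap hs]) _
end
end

section
/- For every x ∈ ℝ³ and every direction v ∈ ℝ³, H(x)⁻¹·DH(x)[v] = (2iℓ/(ℓ² + r²))·G(x)⁻¹·(v·τ)·G(x). (This expresses that the pull-back by H of the left-invariant frame of SU(2) is the flat frame of ℝ³ rotated by G, reflected, and rescaled by Ω(x) = (ℓ² + r²)/(4ℓ).) -/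
open Matrix Complex

noncomputable section

attribute [local instance] Matrix.normedAddCommGroup Matrix.normedSpace

/-!
Put q(x) = ℓ + i x·τ. The Clifford relations (x·τ)(y·τ) + (y·τ)(x·τ) = 2⟨x, y⟩ make q behave
like a quaternion with conjugate q̄(x) = q(−x): q + q̄ = 2ℓ and q̄ q = N := ℓ² + r². Hence
G = q/√N with G⁻¹ = q̄/√N, and H = q²/N with H⁻¹ = q̄²/N. Differentiating H = q²/N, with
p = i v·τ and d = 2⟨x, v⟩ = dN, the claim reduces to q̄²(2ℓp − d) − N d = 2ℓ q̄ p q, which follows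
from q̄² = 2ℓq̄ − N and q̄p − pq = d.
-/

section Algebra

variable {R A : Type*} [CommRing R] [Ring A] [Algebra R A] {q q' p : A} {t N d : R}

lemma sq_mul_sq_of_mul_eq_smul_one (h : q' * q = N • 1) : q' ^ 2 * q ^ 2 = N ^ 2 • 1 := by
  rw [sq, sq, mul_assoc, ← mul_assoc q' q q, h, smul_one_mul, mul_smul_comm, h, smul_smul, sq]

lemma sq_mul_sub_eq_smul_mul_mul (hsum : q + q' = t • 1) (hprod : q' * q = N • 1)
    (hcomm : q' * p - p * q = d • 1) :
    q' ^ 2 * (t • p - d • 1) - (N * d) • 1 = t • (q' * p * q) := by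
  have hsq : q' ^ 2 + N • 1 = t • q' := by
    rw [← hprod, ← mul_smul_one, ← hsum, sq, mul_add, add_comm]
  have hpq : p * q = q' * p - d • 1 := by rw [← hcomm, sub_sub_cancel]
  calc q' ^ 2 * (t • p - d • 1) - (N * d) • 1 = t • (q' ^ 2 * p) - d • (q' ^ 2 + N • 1) := by
        simp only [mul_sub, mul_smul_comm, mul_one]; module
    _ = t • (q' * (q' * p - d • 1)) := by
        rw [hsq, mul_sub, ← mul_assoc, ← sq, mul_smul_comm, mul_one, smul_sub, smul_comm]
    _ = t • (q' * p * q) := by rw [← hpq, mul_assoc]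

end Algebra

lemma pauliVec_mul_add_mul_comm (x y : EuclideanSpace ℝ (Fin 3)) :
    pauliVec x * pauliVec y + pauliVec y * pauliVec x = ((2 * inner ℝ x y : ℝ) : ℂ) • 1 := by
  simp only [PiLp.inner_apply, Fin.sum_univ_three, RCLike.inner_apply, conj_trivial]
  ext i j
  fin_cases i <;> fin_cases j <;>
    simp [pauliVec, pauli, Complex.ext_iff] <;> constructor <;> ring

lemma pauliVec_neg (x : EuclideanSpace ℝ (Fin 3)) : pauliVec (-x) = -pauliVec x := by
  simp only [pauliVec, PiLp.neg_apply, ofReal_neg, neg_smul, neg_add]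

lemma hasFDerivAt_pauliVec (x : EuclideanSpace ℝ (Fin 3)) :
    HasFDerivAt pauliVec ((ofRealCLM ∘L EuclideanSpace.proj 0).smulRight (pauli 0) +
      (ofRealCLM ∘L EuclideanSpace.proj 1).smulRight (pauli 1) +
      (ofRealCLM ∘L EuclideanSpace.proj 2).smulRight (pauli 2)) x := by
  have hcoord (i : Fin 3) : HasFDerivAt (fun y : EuclideanSpace ℝ (Fin 3) => (y i : ℂ) • pauli i)
      ((ofRealCLM ∘L EuclideanSpace.proj i).smulRight (pauli i)) x :=
    (ofRealCLM ∘L EuclideanSpace.proj i).hasFDerivAt.smul_const (pauli i)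
  exact ((hcoord 0).add (hcoord 1)).add (hcoord 2)

def Qmap (ℓ : ℝ) (x : EuclideanSpace ℝ (Fin 3)) : Matrix (Fin 2) (Fin 2) ℂ :=
  (ℓ : ℂ) • 1 + I • pauliVec x

lemma Qmap_add_Qmap_neg (ℓ : ℝ) (x : EuclideanSpace ℝ (Fin 3)) :
    Qmap ℓ x + Qmap ℓ (-x) = (2 * (ℓ : ℂ)) • 1 := by
  rw [Qmap, Qmap, pauliVec_neg]
  module

lemma Qmap_neg_mul_Qmap (ℓ : ℝ) (x : EuclideanSpace ℝ (Fin 3)) :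
    Qmap ℓ (-x) * Qmap ℓ x = ((ℓ ^ 2 + ‖x‖ ^ 2 : ℝ) : ℂ) • 1 := by
  rw [Qmap, Qmap, pauliVec_neg]
  simp only [add_mul, mul_add, smul_mul_smul_comm, one_mul, mul_one, smul_neg, neg_mul,
    pauliVec_mul_self, smul_smul]
  match_scalars <;> simp only [mul_one, I_mul_I] <;> ring

lemma Qmap_neg_mul_sub_mul_Qmap (ℓ : ℝ) (x v : EuclideanSpace ℝ (Fin 3)) :
    Qmap ℓ (-x) * (I • pauliVec v) - (I • pauliVec v) * Qmap ℓ x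
      = ((2 * inner ℝ x v : ℝ) : ℂ) • 1 := by
  rw [Qmap, Qmap, pauliVec_neg, ← pauliVec_mul_add_mul_comm]
  simp only [add_mul, mul_add, smul_mul_smul_comm, one_mul, mul_one, smul_neg, neg_mul]
  match_scalars <;> simp only [mul_one, I_mul_I] <;> ring

lemma Qmap_sq (ℓ : ℝ) (x : EuclideanSpace ℝ (Fin 3)) :
    Qmap ℓ x ^ 2 = ((ℓ ^ 2 - ‖x‖ ^ 2 : ℝ) : ℂ) • 1 + ((2 * ℓ : ℝ) : ℂ) • I • pauliVec x := by
  rw [sq, Qmap]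
  simp only [add_mul, mul_add, smul_mul_smul_comm, one_mul, mul_one, pauliVec_mul_self, smul_smul]
  match_scalars <;> simp only [mul_one, I_mul_I] <;> ring

lemma Hmap_eq_smul_Qmap_sq (ℓ : ℝ) (x : EuclideanSpace ℝ (Fin 3)) :
    Hmap ℓ x = ((ℓ ^ 2 + ‖x‖ ^ 2 : ℝ) : ℂ)⁻¹ • Qmap ℓ x ^ 2 := by
  rw [Hmap, Qmap_sq, ofReal_inv]

lemma inv_Hmap {ℓ : ℝ} {x : EuclideanSpace ℝ (Fin 3)} (hN : ℓ ^ 2 + ‖x‖ ^ 2 ≠ 0) :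
    (Hmap ℓ x)⁻¹ = ((ℓ ^ 2 + ‖x‖ ^ 2 : ℝ) : ℂ)⁻¹ • Qmap ℓ (-x) ^ 2 := by
  have hN' : ((ℓ ^ 2 + ‖x‖ ^ 2 : ℝ) : ℂ) ≠ 0 := ofReal_ne_zero.mpr hN
  apply inv_eq_left_inv
  rw [Hmap_eq_smul_Qmap_sq, smul_mul_smul_comm,
    sq_mul_sq_of_mul_eq_smul_one (Qmap_neg_mul_Qmap ℓ x), smul_smul]
  field_simp
  rw [one_smul]

lemma inv_Gmap {ℓ : ℝ} {x : EuclideanSpace ℝ (Fin 3)} (hN : ℓ ^ 2 + ‖x‖ ^ 2 ≠ 0) :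
    (Gmap ℓ x)⁻¹ = (((Real.sqrt (ℓ ^ 2 + ‖x‖ ^ 2))⁻¹ : ℝ) : ℂ) • Qmap ℓ (-x) := by
  apply inv_eq_left_inv
  rw [Gmap, ← Qmap, smul_mul_smul_comm, Qmap_neg_mul_Qmap, smul_smul, ← ofReal_mul, ← ofReal_mul,
    ← mul_inv, Real.mul_self_sqrt (by positivity), inv_mul_cancel₀ hN, ofReal_one, one_smul]

lemma inv_Gmap_mul_mul_Gmap {ℓ : ℝ} {x : EuclideanSpace ℝ (Fin 3)} (hN : ℓ ^ 2 + ‖x‖ ^ 2 ≠ 0)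
    (M : Matrix (Fin 2) (Fin 2) ℂ) :
    (Gmap ℓ x)⁻¹ * M * Gmap ℓ x
      = ((ℓ ^ 2 + ‖x‖ ^ 2 : ℝ) : ℂ)⁻¹ • (Qmap ℓ (-x) * M * Qmap ℓ x) := by
  rw [inv_Gmap hN, Gmap, ← Qmap, smul_mul_assoc, smul_mul_smul_comm, ← ofReal_mul, ← mul_inv,
    Real.mul_self_sqrt (by positivity), ofReal_inv]

lemma fderiv_Hmap_apply {ℓ : ℝ} {x : EuclideanSpace ℝ (Fin 3)} (hN : ℓ ^ 2 + ‖x‖ ^ 2 ≠ 0)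
    (v : EuclideanSpace ℝ (Fin 3)) :
    fderiv ℝ (Hmap ℓ) x v =
      ((ℓ ^ 2 + ‖x‖ ^ 2 : ℝ) : ℂ)⁻¹ •
          ((2 * (ℓ : ℂ)) • (I • pauliVec v) - ((2 * inner ℝ x v : ℝ) : ℂ) • 1)
        - (((2 * inner ℝ x v : ℝ) : ℂ) / ((ℓ ^ 2 + ‖x‖ ^ 2 : ℝ) : ℂ) ^ 2) • Qmap ℓ x ^ 2 := by
  have hr := (hasStrictFDerivAt_norm_sq x).hasFDerivAt
  have hc := ofRealCLM.hasFDerivAt.comp x ((hasFDerivAt_inv hN).comp x (hr.const_add (ℓ ^ 2)))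
  have hM := ((ofRealCLM.hasFDerivAt.comp x (hr.const_sub (ℓ ^ 2))).smul_const
    (1 : Matrix (Fin 2) (Fin 2) ℂ)).add
      (((hasFDerivAt_pauliVec x).const_smul I).const_smul ((2 * ℓ : ℝ) : ℂ))
  have hH : HasFDerivAt (Hmap ℓ) _ x := hc.smul hM
  -- The continuous linear maps in `hH` carry instances derived from the local normed instance
  -- on matrices, which the simp lemmas evaluating them do not match; `rfl` evaluates them.
  have hv : fderiv ℝ (Hmap ℓ) x v =
      (((ℓ ^ 2 + ‖x‖ ^ 2)⁻¹ : ℝ) : ℂ) •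
          (((-(2 • innerSL ℝ x) v : ℝ) : ℂ) • 1 + ((2 * ℓ : ℝ) : ℂ) • I • pauliVec v)
        + (((2 • innerSL ℝ x) v • -((ℓ ^ 2 + ‖x‖ ^ 2) ^ 2)⁻¹ : ℝ) : ℂ) •
          (((ℓ ^ 2 - ‖x‖ ^ 2 : ℝ) : ℂ) • 1 + ((2 * ℓ : ℝ) : ℂ) • I • pauliVec x) := by
    rw [hH.fderiv]
    rfl
  rw [hv, ← Qmap_sq]
  simp only [_root_.smul_apply, coe_innerSL_apply, nsmul_eq_mul, smul_eq_mul]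
  push_cast
  module

/-- H⁻¹ dH = (2iℓ/(ℓ² + r²))·G⁻¹ (v·τ) G. -/
theorem Hinv_dH_eq_conj_pauliVec (ℓ : ℝ) (hℓ : 0 < ℓ) (x v : EuclideanSpace ℝ (Fin 3)) :
    (Hmap ℓ x)⁻¹ * fderiv ℝ (Hmap ℓ) x v =
      (2 * (ℓ : ℂ) * I / ((ℓ ^ 2 + ‖x‖ ^ 2 : ℝ) : ℂ)) •
        ((Gmap ℓ x)⁻¹ * pauliVec v * Gmap ℓ x) := by
  have hN : ℓ ^ 2 + ‖x‖ ^ 2 ≠ 0 := by positivity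
  have key := sq_mul_sub_eq_smul_mul_mul (Qmap_add_Qmap_neg ℓ x) (Qmap_neg_mul_Qmap ℓ x)
    (Qmap_neg_mul_sub_mul_Qmap ℓ x v)
  rw [inv_Hmap hN, fderiv_Hmap_apply hN, inv_Gmap_mul_mul_Gmap hN, mul_sub, smul_mul_smul_comm,
    smul_mul_smul_comm, sq_mul_sq_of_mul_eq_smul_one (Qmap_neg_mul_Qmap ℓ x),
    eq_add_of_sub_eq key, mul_smul_comm, smul_mul_assoc]
  match_scalars
  · field_simp
  · field_simp
    ring
end
end

section
/- Let s : ℂ → M₂(ℂ) be given by s(z) = (1 + |z|²)^{−1/2}·[[1, −conj(z)], [z, 1]] (a local section of the Hopf bundle, taking values in SU(2)). Then for every z ∈ ℂ and every v ∈ ℂ (regarded as a real tangent direction), the ℝ-Fréchet derivative satisfies s(z)⁻¹·(Ds)(z)[v] = (1/(1 + |z|²)) · [[ (conj(z)·v − z·conj(v))/2 , −conj(v) ], [ v , (z·conj(v) − conj(z)·v)/2 ]]. Equivalently, s⁻¹ds = −Γ t₃ + (i/(2λ)) e t₋ − (i/(2λ)) ē t₊, where Γ(v) = i(z·conj(v)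 − conj(z)·v)/(1+|z|²) is the spin connection 1-form and e(v) = 2λv/(1+|z|²) the frame of the round 2-sphere of radius λ, with t₃ = −(i/2)τ₃ and t± = −(i/2)(τ₁ ± iτ₂). -/
/-! Write `s = ρ • (1 + A z)` with `ρ = (1 + |z|²)^(-1/2)` and `A w = [[0, -w̄], [w, 0]]`, which is
ℝ-linear. Since `(1 + A z)ᴴ (1 + A z) = (1 + |z|²) • 1`, `s` is unitary, so `s⁻¹ = sᴴ`, and the
Leibniz rule gives `ds v = ρ • (A v - (⟪z, v⟫ / (1 + |z|²)) • (1 + A z))`. Hence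
`s⁻¹ ds v = (1 + |z|²)⁻¹ • ((1 + A z)ᴴ A v - ⟪z, v⟫ • 1)`, a traceless matrix, whose expansion in
the basis `t₃, t₋, t₊` is the second form. -/

open Matrix Complex

noncomputable section

attribute [local instance] Matrix.normedAddCommGroup Matrix.normedSpace

/-- The local section s(z) = (1 + |z|²)^{−1/2}·[[1, −conj z],[z, 1]] of the Hopf bundle. -/
def smap (z : ℂ) : Matrix (Fin 2) (Fin 2) ℂ :=
  (((Real.sqrt (1 + Complex.normSq z))⁻¹ : ℝ) : ℂ) •
    !![1, -(starRingEnd ℂ) z; z, 1]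

open scoped RealInnerProductSpace

lemma one_add_normSq_pos (z : ℂ) : 0 < 1 + normSq z :=
  add_pos_of_pos_of_nonneg one_pos (normSq_nonneg z)

def offDiagConj : ℂ →L[ℝ] Matrix (Fin 2) (Fin 2) ℂ :=
  LinearMap.toContinuousLinearMap
    { toFun w := !![0, -(starRingEnd ℂ) w; w, 0]
      map_add' a b := by ext i j; fin_cases i <;> fin_cases j <;> simp; ring
      map_smul' r a := by ext i j; fin_cases i <;> fin_cases j <;> simp [Complex.real_smul] }

lemma offDiagConj_apply (w : ℂ) : offDiagConj w = !![0, -(starRingEnd ℂ) w; w, 0] := rfl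

lemma smap_eq_smul (z : ℂ) : smap z = (√(1 + normSq z))⁻¹ • (1 + offDiagConj z) := by
  rw [smap, coe_smul, offDiagConj_apply]
  congr 1
  ext i j; fin_cases i <;> fin_cases j <;> simp

lemma star_one_add_offDiagConj_mul_self (z : ℂ) :
    star (1 + offDiagConj z) * (1 + offDiagConj z) = (1 + normSq z) • 1 := by
  rw [offDiagConj_apply, star_eq_conjTranspose]
  ext i j
  fin_cases i <;> fin_cases j <;>
    simp [Matrix.mul_apply, Fin.sum_univ_two, mul_conj, normSq_eq_conj_mul_self, add_comm]

lemma hasFDerivAt_inv_sqrt_one_add_norm_sq {E : Type*} [NormedAddCommGroup E]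
    [InnerProductSpace ℝ E] (z : E) :
    HasFDerivAt (fun w : E => (√(1 + ‖w‖ ^ 2))⁻¹)
      (-((1 + ‖z‖ ^ 2) * √(1 + ‖z‖ ^ 2))⁻¹ • innerSL ℝ z) z := by
  have hr : 0 < 1 + ‖z‖ ^ 2 := by positivity
  have h := (hasDerivAt_inv (Real.sqrt_pos.2 hr).ne').comp_hasFDerivAt z
    (((hasStrictFDerivAt_norm_sq z).hasFDerivAt.const_add 1).sqrt hr.ne')
  refine h.congr_fderiv ?_
  ext v
  simp only [_root_.smul_apply, coe_innerSL_apply, nsmul_eq_mul, Nat.cast_ofNat, smul_eq_mul]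
  field_simp
  rw [Real.sq_sqrt hr.le]

lemma star_smap_mul_self (z : ℂ) : star (smap z) * smap z = 1 := by
  have hr := one_add_normSq_pos z
  rw [smap_eq_smul, star_smul, star_trivial, smul_mul_smul_comm, star_one_add_offDiagConj_mul_self,
    smul_smul, ← sq, inv_pow, Real.sq_sqrt hr.le, inv_mul_cancel₀ hr.ne', one_smul]

lemma inv_smap (z : ℂ) : (smap z)⁻¹ = star (smap z) := inv_eq_left_inv (star_smap_mul_self z)

lemma hasFDerivAt_smap (z : ℂ) :
    HasFDerivAt smap ((√(1 + normSq z))⁻¹ • offDiagConj +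
      (-((1 + normSq z) * √(1 + normSq z))⁻¹ • innerSL ℝ z).smulRight (1 + offDiagConj z)) z := by
  have hρ := hasFDerivAt_inv_sqrt_one_add_norm_sq z
  simp only [← normSq_eq_norm_sq] at hρ
  have hs := hρ.fun_smul (offDiagConj.hasFDerivAt.const_add 1)
  simp only [← smap_eq_smul] at hs
  exact hs

lemma fderiv_smap_apply (z v : ℂ) :
    fderiv ℝ smap z v =
      (√(1 + normSq z))⁻¹ • (offDiagConj v - (⟪z, v⟫ / (1 + normSq z)) • (1 + offDiagConj z)) := by
  have hr := one_add_normSq_pos z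
  rw [(hasFDerivAt_smap z).fderiv]
  simp only [_root_.add_apply, _root_.smul_apply, ContinuousLinearMap.smulRight_apply, innerSL_apply_apply, smul_eq_mul, smul_sub, smul_smul]
  rw [sub_eq_add_neg, ← neg_smul]
  congr 2
  field_simp

lemma star_one_add_offDiagConj_mul_offDiagConj_sub (z v : ℂ) :
    star (1 + offDiagConj z) * offDiagConj v - ⟪z, v⟫ • 1 =
      !![((starRingEnd ℂ) z * v - z * (starRingEnd ℂ) v) / 2, -(starRingEnd ℂ) v;
        v, (z * (starRingEnd ℂ) v - (starRingEnd ℂ) z * v) / 2] := by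
  have hinner : ((⟪z, v⟫ : ℝ) : ℂ) = ((starRingEnd ℂ) z * v + z * (starRingEnd ℂ) v) / 2 := by
    rw [Complex.inner, re_eq_add_conj]; simp [mul_comm]
  rw [← coe_smul, hinner, offDiagConj_apply, offDiagConj_apply, star_eq_conjTranspose]
  ext i j; fin_cases i <;> fin_cases j <;> simp [Matrix.mul_apply, Fin.sum_univ_two] <;> ring

lemma inv_smap_mul_fderiv_smap_apply (z v : ℂ) :
    (smap z)⁻¹ * fderiv ℝ smap z v =
        (((1 + Complex.normSq z : ℝ) : ℂ))⁻¹ •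
          !![((starRingEnd ℂ) z * v - z * (starRingEnd ℂ) v) / 2, -(starRingEnd ℂ) v;
            v, (z * (starRingEnd ℂ) v - (starRingEnd ℂ) z * v) / 2] := by
  have hr := one_add_normSq_pos z
  rw [inv_smap, smap_eq_smul, fderiv_smap_apply, star_smul, star_trivial, smul_mul_smul_comm,
    ← mul_inv, Real.mul_self_sqrt hr.le, mul_sub, mul_smul_comm, star_one_add_offDiagConj_mul_self,
    smul_smul, div_mul_cancel₀ _ hr.ne', star_one_add_offDiagConj_mul_offDiagConj_sub, ← coe_smul,
    ofReal_inv]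

lemma traceless_eq_pauli_combination (a b c : ℂ) :
    !![a, b; c, -a] =
      (2 * I * a) • (-(I / 2) • pauli 2) + (I * c) • (-(I / 2) • (pauli 0 - I • pauli 1)) -
        (-(I * b)) • (-(I / 2) • (pauli 0 + I • pauli 1)) := by
  ext i j; fin_cases i <;> fin_cases j <;> simp [pauli] <;> ring_nf <;> simp

/-- the Maurer–Cartan form of the Hopf section,
s⁻¹ds = (1/(1+|z|²))·[[(z̄v − zv̄)/2, −v̄],[v, (zv̄ − z̄v)/2]]; equivalently
s⁻¹ds = −Γ t₃ + (i/(2λ)) e t₋ − (i/(2λ)) ē t₊ with Γ(v) = i(zv̄ − z̄v)/(1+|z|²),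
e(v) = 2λv/(1+|z|²), t₃ = −(i/2)τ₃, t± = −(i/2)(τ₁ ± iτ₂). -/
theorem smap_maurer_cartan (z v : ℂ) :
    (smap z)⁻¹ * fderiv ℝ smap z v =
        (((1 + Complex.normSq z : ℝ) : ℂ))⁻¹ •
          !![((starRingEnd ℂ) z * v - z * (starRingEnd ℂ) v) / 2, -(starRingEnd ℂ) v;
            v, (z * (starRingEnd ℂ) v - (starRingEnd ℂ) z * v) / 2] ∧
      ∀ lam : ℝ, 0 < lam →
        (smap z)⁻¹ * fderiv ℝ smap z v =
          (-(I * (z * (starRingEnd ℂ) v - (starRingEnd ℂ) z * v) /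
                ((1 + Complex.normSq z : ℝ) : ℂ))) • (-(I / 2) • pauli 2) +
            ((I / (2 * (lam : ℂ))) * (2 * (lam : ℂ) * v / ((1 + Complex.normSq z : ℝ) : ℂ))) •
              (-(I / 2) • (pauli 0 - I • pauli 1)) -
              ((I / (2 * (lam : ℂ))) *
                  (2 * (lam : ℂ) * (starRingEnd ℂ) v / ((1 + Complex.normSq z : ℝ) : ℂ))) •
                (-(I / 2) • (pauli 0 + I • pauli 1)) := by
  have h := inv_smap_mul_fderiv_smap_apply z v
  refine ⟨h, fun lam hlam => ?_⟩
  have hlam₀ : (lam : ℂ) ≠ 0 := ofReal_ne_zero.2 hlam.ne'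
  set r : ℂ := ((1 + normSq z : ℝ) : ℂ)
  rw [h]
  convert traceless_eq_pauli_combination
    (r⁻¹ * (((starRingEnd ℂ) z * v - z * (starRingEnd ℂ) v) / 2)) (r⁻¹ * -(starRingEnd ℂ) v)
    (r⁻¹ * v) using 4
  · ext i j; fin_cases i <;> fin_cases j <;> simp; ring
  all_goals field_simp
  ring
end
end

section
/- Let j be a half-integer (2j ∈ ℕ) and let s, m satisfy j+s, j−s, j+m, j−m ∈ ℕ. If s < j then i·X₊(Y^j_{sm}) = √((j−s)(j+s+1)) · Y^j_{s+1,m}, and if s > −j then i·X₋(Y^j_{sm}) = √((j+s)(j−s+1)) · Y^j_{s−1,m}, as identities in ℂ[z₁,z₂,w₁,w₂]. -/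
open MvPolynomial

noncomputable section

/-- Work in ℂ[z₁,z₂,w₁,w₂]: variable 0 is z₁, 1 is z₂, 2 is w₁, 3 is w₂
(w₁, w₂ playing the role of the complex conjugates z̄₁, z̄₂). -/
abbrev R4 := MvPolynomial (Fin 4) ℂ

/-- The derivation X₊ = i(z₁·∂/∂w₂ − z₂·∂/∂w₁). -/
def Xp (P : R4) : R4 := Complex.I • (X 0 * pderiv 3 P - X 1 * pderiv 2 P)

/-- The derivation X₋ = i(w₂·∂/∂z₁ − w₁·∂/∂z₂). -/
def Xm (P : R4) : R4 := Complex.I • (X 3 * pderiv 0 P - X 2 * pderiv 1 P)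

/-- The derivation X₃ = (i/2)(w₁·∂/∂w₁ + w₂·∂/∂w₂ − z₁·∂/∂z₁ − z₂·∂/∂z₂). -/
def X3 (P : R4) : R4 :=
  (Complex.I / 2) •
    (X 2 * pderiv 2 P + X 3 * pderiv 3 P - X 0 * pderiv 0 P - X 1 * pderiv 1 P)

/-- The harmonic Y^j_{sm} with a = j+s, b = j−s, c = j+m, d = j−m (so a+b = c+d = 2j):
Y^j_{sm} = (−1)^{j−s}·(a!b!c!d!)^{1/2} · Σ_k (−1)^k/((c−k)!·k!·(b−k)!·(a−c+k)!) ·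
z₁^{a−c+k}·z₂^{c−k}·w₁^k·w₂^{b−k}, summed over max(0,c−a) ≤ k ≤ min(c,b);
note s−m = a−c, j+m−k = c−k, j−s−k = b−k, s−m+k = a−c+k. -/
def Ypoly (a b c d : ℕ) : R4 :=
  ((-1 : ℂ) ^ b *
      (Real.sqrt ((a.factorial * b.factorial * c.factorial * d.factorial : ℕ)) : ℂ)) •
    ∑ k ∈ Finset.Icc (c - a) (min c b),
      ((-1 : ℂ) ^ k /
          (((c - k).factorial * k.factorial * (b - k).factorial
              * (a + k - c).factorial : ℕ) : ℂ)) •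
        (X 0 ^ (a + k - c) * X 1 ^ (c - k) * X 2 ^ k * X 3 ^ (b - k))

/-! ### Auxiliary definitions and lemmas -/

/-- the basic monomial -/
def mono (p q r s : ℕ) : R4 := X 0 ^ p * X 1 ^ q * X 2 ^ r * X 3 ^ s

/-- the coefficient inside the sum defining `Ypoly` -/
def cf (a b c k : ℕ) : ℂ :=
  (-1 : ℂ) ^ k /
    (((c - k).factorial * k.factorial * (b - k).factorial * (a + k - c).factorial : ℕ) : ℂ)

/-- the scalar prefactor of `Ypoly` -/
def Cc (a b c d : ℕ) : ℂ :=
  (-1 : ℂ) ^ b *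
    (Real.sqrt ((a.factorial * b.factorial * c.factorial * d.factorial : ℕ)) : ℂ)

lemma Ypoly_eq (a b c d : ℕ) :
    Ypoly a b c d =
      Cc a b c d • ∑ k ∈ Finset.Icc (c - a) (min c b),
        cf a b c k • mono (a + k - c) (c - k) k (b - k) := rfl

lemma fnz (n : ℕ) : ((n.factorial : ℕ) : ℂ) ≠ 0 := Nat.cast_ne_zero.mpr n.factorial_ne_zero

lemma fnz' (n : ℕ) (h : 0 < n := by positivity) : ((n : ℕ) : ℂ) ≠ 0 := Nat.cast_ne_zero.mpr h.ne'

lemma expandXp (P : R4) : Complex.I • Xp P = X 1 * pderiv 2 P - X 0 * pderiv 3 P := by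
  unfold Xp; rw [smul_smul, Complex.I_mul_I, neg_one_smul, neg_sub]

lemma expandXm (P : R4) : Complex.I • Xm P = X 2 * pderiv 1 P - X 3 * pderiv 0 P := by
  unfold Xm; rw [smul_smul, Complex.I_mul_I, neg_one_smul, neg_sub]

lemma pd0 (p q r s : ℕ) : pderiv 0 (mono p q r s)
    = (p : ℂ) • (X 0 ^ (p-1) * X 1 ^ q * X 2 ^ r * X 3 ^ s : R4) := by
  unfold mono
  simp [pderiv_X, Derivation.leibniz, Derivation.leibniz_pow, Pi.single, smul_eq_C_mul]
  ring

lemma pd1 (p q r s : ℕ) : pderiv 1 (mono p q r s)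
    = (q : ℂ) • (X 0 ^ p * X 1 ^ (q-1) * X 2 ^ r * X 3 ^ s : R4) := by
  unfold mono
  simp [pderiv_X, Derivation.leibniz, Derivation.leibniz_pow, Pi.single, smul_eq_C_mul]
  ring

lemma pd2 (p q r s : ℕ) : pderiv 2 (mono p q r s)
    = (r : ℂ) • (X 0 ^ p * X 1 ^ q * X 2 ^ (r-1) * X 3 ^ s : R4) := by
  unfold mono
  simp [pderiv_X, Derivation.leibniz, Derivation.leibniz_pow, Pi.single, smul_eq_C_mul]
  ring

lemma pd3 (p q r s : ℕ) : pderiv 3 (mono p q r s)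
    = (s : ℂ) • (X 0 ^ p * X 1 ^ q * X 2 ^ r * X 3 ^ (s-1) : R4) := by
  unfold mono
  simp [pderiv_X, Derivation.leibniz, Derivation.leibniz_pow, Pi.single, smul_eq_C_mul]
  ring

lemma keyXp (p q r s : ℕ) :
    X 1 * pderiv 2 (mono p q r s) - X 0 * pderiv 3 (mono p q r s) =
      ((r : ℕ) : ℂ) • mono p (q+1) (r-1) s - ((s : ℕ) : ℂ) • mono (p+1) q r (s-1) := by
  rw [pd2, pd3, mul_smul_comm, mul_smul_comm]
  unfold mono
  congr 1 <;> · congr 1; ring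

lemma keyXm (p q r s : ℕ) :
    X 2 * pderiv 1 (mono p q r s) - X 3 * pderiv 0 (mono p q r s) =
      ((q : ℕ) : ℂ) • mono p (q-1) (r+1) s - ((p : ℕ) : ℂ) • mono (p-1) q r (s+1) := by
  rw [pd0, pd1, mul_smul_comm, mul_smul_comm]
  unfold mono
  congr 1 <;> · congr 1; ring

lemma toRange (n : ℕ) (I : Finset ℕ) (hI : I ⊆ Finset.range n) (f : ℕ → R4) :
    ∑ k ∈ I, f k = ∑ k ∈ Finset.range n, if k ∈ I then f k else 0 := by
  rw [Finset.sum_ite_mem, Finset.inter_eq_right.mpr hI]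

lemma ite_smul_zero (P : Prop) [Decidable P] (x : ℂ) (M : R4) :
    (if P then x • M else 0) = (if P then x else 0) • M := by
  split_ifs <;> simp

/-! ### square-root bookkeeping -/

lemma CcStep1 (a b c d : ℕ) (hb : 1 ≤ b) :
    ((Real.sqrt (b * (a + 1)) : ℝ) : ℂ) * Cc (a+1) (b-1) c d
      = -((a+1 : ℕ) : ℂ) * Cc a b c d := by
  obtain ⟨b, rfl⟩ : ∃ b', b = b' + 1 := ⟨b - 1, by omega⟩
  unfold Cc
  simp only [Nat.add_sub_cancel]
  have key : Real.sqrt ((b+1 : ℕ) * ((a:ℝ) + 1)) *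
      Real.sqrt (((a+1).factorial * b.factorial * c.factorial * d.factorial : ℕ))
      = (a + 1 : ℝ) * Real.sqrt ((a.factorial * (b+1).factorial * c.factorial * d.factorial : ℕ)) := by
    rw [← Real.sqrt_mul (by positivity)]
    nth_rewrite 2 [show ((a:ℝ)+1) = Real.sqrt (((a:ℝ)+1)^2) from (Real.sqrt_sq (by positivity)).symm]
    rw [← Real.sqrt_mul (by positivity)]
    congr 1
    push_cast [Nat.factorial_succ]
    ring
  calc ((Real.sqrt ((b+1 : ℕ) * ((a:ℝ) + 1)) : ℝ) : ℂ) *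
        ((-1 : ℂ)^b * (Real.sqrt (((a+1).factorial * b.factorial * c.factorial * d.factorial : ℕ)) : ℂ))
      = (-1:ℂ)^b * ((Real.sqrt ((b+1 : ℕ) * ((a:ℝ) + 1)) *
          Real.sqrt (((a+1).factorial * b.factorial * c.factorial * d.factorial : ℕ)) : ℝ) : ℂ) := by
        push_cast; ring
    _ = (-1:ℂ)^b * (((a + 1 : ℝ) *
          Real.sqrt ((a.factorial * (b+1).factorial * c.factorial * d.factorial : ℕ)) : ℝ) : ℂ) := by
        rw [key]
    _ = -((a+1 : ℕ) : ℂ) * ((-1:ℂ)^(b+1) *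
          (Real.sqrt ((a.factorial * (b+1).factorial * c.factorial * d.factorial : ℕ)) : ℂ)) := by
        push_cast; ring

lemma CcStep2 (a b c d : ℕ) (ha : 1 ≤ a) :
    ((Real.sqrt (a * (b + 1)) : ℝ) : ℂ) * Cc (a-1) (b+1) c d
      = -((b+1 : ℕ) : ℂ) * Cc a b c d := by
  obtain ⟨a, rfl⟩ : ∃ a', a = a' + 1 := ⟨a - 1, by omega⟩
  unfold Cc
  simp only [Nat.add_sub_cancel]
  have key : Real.sqrt ((a+1 : ℕ) * ((b:ℝ) + 1)) *
      Real.sqrt ((a.factorial * (b+1).factorial * c.factorial * d.factorial : ℕ))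
      = (b + 1 : ℝ) * Real.sqrt (((a+1).factorial * b.factorial * c.factorial * d.factorial : ℕ)) := by
    rw [← Real.sqrt_mul (by positivity)]
    nth_rewrite 2 [show ((b:ℝ)+1) = Real.sqrt (((b:ℝ)+1)^2) from (Real.sqrt_sq (by positivity)).symm]
    rw [← Real.sqrt_mul (by positivity)]
    congr 1
    push_cast [Nat.factorial_succ]
    ring
  calc ((Real.sqrt ((a+1 : ℕ) * ((b:ℝ) + 1)) : ℝ) : ℂ) *
        ((-1 : ℂ)^(b+1) * (Real.sqrt ((a.factorial * (b+1).factorial * c.factorial * d.factorial : ℕ)) : ℂ))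
      = (-1:ℂ)^(b+1) * ((Real.sqrt ((a+1 : ℕ) * ((b:ℝ) + 1)) *
          Real.sqrt ((a.factorial * (b+1).factorial * c.factorial * d.factorial : ℕ)) : ℝ) : ℂ) := by
        push_cast; ring
    _ = (-1:ℂ)^(b+1) * (((b + 1 : ℝ) *
          Real.sqrt (((a+1).factorial * b.factorial * c.factorial * d.factorial : ℕ)) : ℝ) : ℂ) := by
        rw [key]
    _ = -((b+1 : ℕ) : ℂ) * ((-1:ℂ)^b *
          (Real.sqrt (((a+1).factorial * b.factorial * c.factorial * d.factorial : ℕ)) : ℂ)) := by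
        push_cast; ring

/-! ### the per-index coefficient identities -/

lemma hred1 (a b c k : ℕ) (hb : 1 ≤ b) (hk : k ≤ b) :
    (if k+1 ∈ Finset.Icc (c-a) (min c b) then cf a b c (k+1) * ((k+1 : ℕ) : ℂ) else 0) -
    (if k ∈ Finset.Icc (c-a) (min c b) then cf a b c k * ((b-k : ℕ) : ℂ) else 0) =
    -((a+1 : ℕ) : ℂ) *
      (if k ∈ Finset.Icc (c-(a+1)) (min c (b-1)) then cf (a+1) (b-1) c k else 0) := by
  simp only [Finset.mem_Icc]
  split_ifs with h1 h2 h3 h4 h5 h6 h7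
  · -- main branch
    obtain ⟨p, rfl⟩ : ∃ p, c = k+1+p := ⟨c-(k+1), by omega⟩
    obtain ⟨r, rfl⟩ : ∃ r, b = k+1+r := ⟨b-(k+1), by omega⟩
    obtain ⟨q, rfl⟩ : ∃ q, a = p+1+q := ⟨a-(p+1), by omega⟩
    unfold cf
    simp only [show k+1+p-(k+1) = p from by omega,
      show p+1+q+(k+1)-(k+1+p) = q+1 from by omega,
      show k+1+r-(k+1) = r from by omega,
      show k+1+p-k = p+1 from by omega,
      show k+1+r-k = r+1 from by omega,
      show p+1+q+k-(k+1+p) = q from by omega,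
      show k+1+r-1-k = r from by omega,
      show p+1+q+1+k-(k+1+p) = q+1 from by omega]
    have d₁ : ((p.factorial * (k+1).factorial * r.factorial * (q+1).factorial : ℕ) : ℂ) ≠ 0 := fnz' _
    have d₂ : (((p+1).factorial * k.factorial * (r+1).factorial * q.factorial : ℕ) : ℂ) ≠ 0 := fnz' _
    have d₃ : (((p+1).factorial * k.factorial * r.factorial * (q+1).factorial : ℕ) : ℂ) ≠ 0 := fnz' _
    rw [div_mul_eq_mul_div, div_mul_eq_mul_div, mul_div_assoc',
      div_sub_div _ _ d₁ d₂, div_eq_div_iff (mul_ne_zero d₁ d₂) d₃]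
    push_cast [Nat.factorial_succ]
    ring
  · exfalso; omega
  · -- c = a+k+1
    have hc : c = a+k+1 := by omega
    subst hc
    obtain ⟨r, rfl⟩ : ∃ r, b = k+1+r := ⟨b-(k+1), by omega⟩
    unfold cf
    simp only [show a+k+1-(k+1) = a from by omega,
      show k+1+r-(k+1) = r from by omega,
      show a+(k+1)-(a+k+1) = 0 from by omega,
      show a+k+1-k = a+1 from by omega,
      show k+1+r-1-k = r from by omega,
      show a+1+k-(a+k+1) = 0 from by omega]
    simp only [Nat.factorial_succ, Nat.factorial_zero]
    have h₁ := fnz a; have h₂ := fnz r; have h₃ := fnz k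
    have g₁ := fnz' (a+1); have g₂ := fnz' (r+1); have g₃ := fnz' (k+1)
    push_cast at g₁ g₂ g₃ ⊢
    field_simp
    ring
  · exfalso; omega
  · -- k = c
    have hc : c = k := by omega
    subst hc
    obtain ⟨r, rfl⟩ : ∃ r, b = c+1+r := ⟨b-(c+1), by omega⟩
    unfold cf
    simp only [show c-c = 0 from by omega,
      show c+1+r-c = r+1 from by omega,
      show a+c-c = a from by omega,
      show c+1+r-1-c = r from by omega,
      show a+1+c-c = a+1 from by omega]
    simp only [Nat.factorial_succ, Nat.factorial_zero]
    have h₁ := fnz a; have h₂ := fnz r; have h₃ := fnz c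
    have g₁ := fnz' (a+1); have g₂ := fnz' (r+1); have g₃ := fnz' (c+1)
    push_cast at g₁ g₂ g₃ ⊢
    field_simp
    ring
  · -- k = b
    rw [show b-k = 0 from by omega]
    simp
  · exfalso; omega
  · simp

lemma hred2 (a b c k : ℕ) (ha : 1 ≤ a) (hk : k ≤ b + 1) :
    (if k ∈ Finset.Icc (c-a+1) (min c b + 1) then cf a b c (k-1) * ((c-(k-1) : ℕ) : ℂ) else 0) -
    (if k ∈ Finset.Icc (c-a) (min c b) then cf a b c k * ((a+k-c : ℕ) : ℂ) else 0) =
    -((b+1 : ℕ) : ℂ) *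
      (if k ∈ Finset.Icc (c-(a-1)) (min c (b+1)) then cf (a-1) (b+1) c k else 0) := by
  simp only [Finset.mem_Icc]
  split_ifs with h1 h2 h3 h4 h5 h6 h7
  · -- main branch
    obtain ⟨k, rfl⟩ : ∃ k', k = k'+1 := ⟨k-1, by omega⟩
    obtain ⟨p, rfl⟩ : ∃ p, c = k+1+p := ⟨c-(k+1), by omega⟩
    obtain ⟨r, rfl⟩ : ∃ r, b = k+1+r := ⟨b-(k+1), by omega⟩
    obtain ⟨q, rfl⟩ : ∃ q, a = p+1+q := ⟨a-(p+1), by omega⟩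
    unfold cf
    simp only [show k+1-1 = k from by omega,
      show k+1+p-k = p+1 from by omega,
      show k+1+r-k = r+1 from by omega,
      show p+1+q+k-(k+1+p) = q from by omega,
      show k+1+p-(k+1) = p from by omega,
      show k+1+r-(k+1) = r from by omega,
      show p+1+q+(k+1)-(k+1+p) = q+1 from by omega,
      show p+1+q-1+(k+1)-(k+1+p) = q from by omega,
      show k+1+r+1-(k+1) = r+1 from by omega]
    have d₁ : (((p+1).factorial * k.factorial * (r+1).factorial * q.factorial : ℕ) : ℂ) ≠ 0 := fnz' _
    have d₂ : ((p.factorial * (k+1).factorial * r.factorial * (q+1).factorial : ℕ) : ℂ) ≠ 0 := fnz' _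
    have d₃ : ((p.factorial * (k+1).factorial * (r+1).factorial * q.factorial : ℕ) : ℂ) ≠ 0 := fnz' _
    rw [div_mul_eq_mul_div, div_mul_eq_mul_div, mul_div_assoc',
      div_sub_div _ _ d₁ d₂, div_eq_div_iff (mul_ne_zero d₁ d₂) d₃]
    push_cast [Nat.factorial_succ]
    ring
  · exfalso; omega
  · -- k = b+1 ≤ c
    obtain ⟨k, rfl⟩ : ∃ k', k = k'+1 := ⟨k-1, by omega⟩
    have hbk : b = k := by omega
    subst hbk
    obtain ⟨p, rfl⟩ : ∃ p, c = b+1+p := ⟨c-(b+1), by omega⟩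
    obtain ⟨q, rfl⟩ : ∃ q, a = p+1+q := ⟨a-(p+1), by omega⟩
    unfold cf
    simp only [show b+1-1 = b from by omega,
      show b+1+p-b = p+1 from by omega,
      show b-b = 0 from by omega,
      show p+1+q+b-(b+1+p) = q from by omega,
      show b+1+p-(b+1) = p from by omega,
      show p+1+q-1+(b+1)-(b+1+p) = q from by omega,
      show b+1-(b+1) = 0 from by omega]
    simp only [Nat.factorial_zero]
    have d₁ : (((p+1).factorial * b.factorial * 1 * q.factorial : ℕ) : ℂ) ≠ 0 := fnz' _
    have d₃ : ((p.factorial * (b+1).factorial * 1 * q.factorial : ℕ) : ℂ) ≠ 0 := fnz' _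
    rw [sub_zero, div_mul_eq_mul_div, mul_div_assoc', div_eq_div_iff d₁ d₃]
    push_cast [Nat.factorial_succ]
    ring
  · -- the factor c-(k-1) vanishes
    rw [show c - (k-1) = 0 from by omega]
    simp
  · -- k = 0, c < a
    have hk0 : k = 0 := by omega
    subst hk0
    obtain ⟨q, rfl⟩ : ∃ q, a = c+1+q := ⟨a-(c+1), by omega⟩
    unfold cf
    simp only [show c-0 = c from by omega,
      show b-0 = b from by omega,
      show c+1+q+0-c = q+1 from by omega,
      show c+1+q-1+0-c = q from by omega,
      show b+1-0 = b+1 from by omega]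
    simp only [Nat.factorial_zero]
    have d₂ : ((c.factorial * 1 * b.factorial * (q+1).factorial : ℕ) : ℂ) ≠ 0 := fnz' _
    have d₃ : ((c.factorial * 1 * (b+1).factorial * q.factorial : ℕ) : ℂ) ≠ 0 := fnz' _
    rw [zero_sub, div_mul_eq_mul_div, mul_div_assoc', ← neg_div, div_eq_div_iff d₂ d₃]
    push_cast [Nat.factorial_succ]
    ring
  · -- c = a+k
    rw [show a+k-c = 0 from by omega]
    simp
  · exfalso; omega
  · simp

lemma scalar1 (a b c d k : ℕ) (habcd : a + b = c + d) (hb : 1 ≤ b) (hk : k ≤ b) :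
    Cc a b c d *
      ((if k+1 ∈ Finset.Icc (c-a) (min c b) then cf a b c (k+1) * ((k+1 : ℕ) : ℂ) else 0) -
       (if k ∈ Finset.Icc (c-a) (min c b) then cf a b c k * ((b-k : ℕ) : ℂ) else 0)) =
    ((Real.sqrt (b * (a + 1)) : ℝ) : ℂ) *
      (Cc (a+1) (b-1) c d *
       (if k ∈ Finset.Icc (c-(a+1)) (min c (b-1)) then cf (a+1) (b-1) c k else 0)) := by
  rw [← mul_assoc, CcStep1 a b c d hb, hred1 a b c k hb hk]
  ring

lemma scalar2 (a b c d k : ℕ) (habcd : a + b = c + d) (ha : 1 ≤ a) (hk : k ≤ b + 1) :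
    Cc a b c d *
      ((if k ∈ Finset.Icc (c-a+1) (min c b + 1) then cf a b c (k-1) * ((c-(k-1) : ℕ) : ℂ) else 0) -
       (if k ∈ Finset.Icc (c-a) (min c b) then cf a b c k * ((a+k-c : ℕ) : ℂ) else 0)) =
    ((Real.sqrt (a * (b + 1)) : ℝ) : ℂ) *
      (Cc (a-1) (b+1) c d *
       (if k ∈ Finset.Icc (c-(a-1)) (min c (b+1)) then cf (a-1) (b+1) c k else 0)) := by
  rw [← mul_assoc, CcStep2 a b c d ha, hred2 a b c k ha hk]
  ring

/-! ### the two halves of the ladder identity -/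

theorem part1 (a b c d : ℕ) (habcd : a + b = c + d) (hb : 1 ≤ b) :
    Complex.I • Xp (Ypoly a b c d) =
      ((Real.sqrt (b * (a + 1)) : ℝ) : ℂ) • Ypoly (a + 1) (b - 1) c d := by
  have hIsub : Finset.Icc (c-a) (min c b) ⊆ Finset.range (b + 1) := by
    intro x hx
    rw [Finset.mem_Icc] at hx
    rw [Finset.mem_range]; omega
  have hIsub' : Finset.Icc (c - (a+1)) (min c (b-1)) ⊆ Finset.range (b + 1) := by
    intro x hx
    rw [Finset.mem_Icc] at hx
    rw [Finset.mem_range]; omega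
  have step1 : Complex.I • Xp (Ypoly a b c d) =
      Cc a b c d • ∑ k ∈ Finset.Icc (c-a) (min c b), cf a b c k •
        (((k : ℕ) : ℂ) • mono (a+k-c) (c-k+1) (k-1) (b-k) -
         ((b-k : ℕ) : ℂ) • mono (a+k-c+1) (c-k) k (b-k-1)) := by
    rw [Ypoly_eq, expandXp, Derivation.map_smul, Derivation.map_smul,
      mul_smul_comm, mul_smul_comm, ← smul_sub]
    congr 1
    rw [map_sum, map_sum, Finset.mul_sum, Finset.mul_sum, ← Finset.sum_sub_distrib]
    refine Finset.sum_congr rfl fun k _ => ?_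
    rw [Derivation.map_smul, Derivation.map_smul, mul_smul_comm, mul_smul_comm,
      ← smul_sub, keyXp]
  have step2 : Complex.I • Xp (Ypoly a b c d) =
      Cc a b c d •
        ((∑ k ∈ Finset.Icc (c-a) (min c b),
            (cf a b c k * ((k:ℕ):ℂ)) • mono (a+k-c) (c-k+1) (k-1) (b-k)) -
         (∑ k ∈ Finset.Icc (c-a) (min c b),
            (cf a b c k * ((b-k:ℕ):ℂ)) • mono (a+k-c+1) (c-k) k (b-k-1))) := by
    rw [step1]
    congr 1
    rw [← Finset.sum_sub_distrib]
    refine Finset.sum_congr rfl fun k _ => ?_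
    rw [smul_sub, smul_smul, smul_smul]
  have S1 : (∑ k ∈ Finset.Icc (c-a) (min c b),
        (cf a b c k * ((k:ℕ):ℂ)) • mono (a+k-c) (c-k+1) (k-1) (b-k)) =
      ∑ k ∈ Finset.range (b+1),
        (if k+1 ∈ Finset.Icc (c-a) (min c b) then
          (cf a b c (k+1) * ((k+1 : ℕ):ℂ)) • mono (a+1+k-c) (c-k) k (b-1-k) else 0) := by
    rw [toRange (b+1) _ hIsub]
    rw [Finset.sum_range_succ']
    have h0 : (if 0 ∈ Finset.Icc (c-a) (min c b) then
        (cf a b c 0 * ((0:ℕ):ℂ)) • mono (a+0-c) (c-0+1) (0-1) (b-0) else 0) = 0 := by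
      split_ifs <;> simp
    rw [h0, add_zero]
    conv_rhs => rw [Finset.sum_range_succ]
    have hb1 : (if b+1 ∈ Finset.Icc (c-a) (min c b) then
        (cf a b c (b+1) * ((b+1 : ℕ):ℂ)) • mono (a+1+b-c) (c-b) b (b-1-b) else 0) = 0 := by
      rw [if_neg]; simp only [Finset.mem_Icc]; omega
    rw [hb1, add_zero]
    refine Finset.sum_congr rfl fun k hk => ?_
    split_ifs with h
    · rw [Finset.mem_Icc] at h
      have e1 : a+(k+1)-c = a+1+k-c := by omega
      have e2 : c-(k+1)+1 = c-k := by omega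
      have e3 : k+1-1 = k := by omega
      have e4 : b-(k+1) = b-1-k := by omega
      rw [e1, e2, e3, e4]
    · rfl
  have S2 : (∑ k ∈ Finset.Icc (c-a) (min c b),
        (cf a b c k * ((b-k:ℕ):ℂ)) • mono (a+k-c+1) (c-k) k (b-k-1)) =
      ∑ k ∈ Finset.range (b+1),
        (if k ∈ Finset.Icc (c-a) (min c b) then
          (cf a b c k * ((b-k:ℕ):ℂ)) • mono (a+1+k-c) (c-k) k (b-1-k) else 0) := by
    rw [toRange (b+1) _ hIsub]
    refine Finset.sum_congr rfl fun k hk => ?_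
    split_ifs with h
    · rw [Finset.mem_Icc] at h
      have e1 : a+k-c+1 = a+1+k-c := by omega
      have e4 : b-k-1 = b-1-k := by omega
      rw [e1, e4]
    · rfl
  rw [step2, S1, S2, ← Finset.sum_sub_distrib, Finset.smul_sum]
  conv_rhs => rw [Ypoly_eq, smul_smul, toRange (b+1) _ hIsub', Finset.smul_sum]
  refine Finset.sum_congr rfl fun k hk => ?_
  rw [Finset.mem_range] at hk
  rw [ite_smul_zero, ite_smul_zero, ite_smul_zero, ← sub_smul, smul_smul, smul_smul]
  congr 1
  rw [scalar1 a b c d k habcd hb (by omega), mul_assoc]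

theorem part2 (a b c d : ℕ) (habcd : a + b = c + d) (ha : 1 ≤ a) :
    Complex.I • Xm (Ypoly a b c d) =
      ((Real.sqrt (a * (b + 1)) : ℝ) : ℂ) • Ypoly (a - 1) (b + 1) c d := by
  have hIsub : Finset.Icc (c-a) (min c b) ⊆ Finset.range (b + 1) := by
    intro x hx
    rw [Finset.mem_Icc] at hx
    rw [Finset.mem_range]; omega
  have hIsub2 : Finset.Icc (c-a) (min c b) ⊆ Finset.range (b + 2) := by
    intro x hx
    rw [Finset.mem_Icc] at hx
    rw [Finset.mem_range]; omega
  have hIsub' : Finset.Icc (c - (a-1)) (min c (b+1)) ⊆ Finset.range (b + 2) := by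
    intro x hx
    rw [Finset.mem_Icc] at hx
    rw [Finset.mem_range]; omega
  have step1 : Complex.I • Xm (Ypoly a b c d) =
      Cc a b c d • ∑ k ∈ Finset.Icc (c-a) (min c b), cf a b c k •
        (((c-k : ℕ) : ℂ) • mono (a+k-c) (c-k-1) (k+1) (b-k) -
         ((a+k-c : ℕ) : ℂ) • mono (a+k-c-1) (c-k) k (b-k+1)) := by
    rw [Ypoly_eq, expandXm, Derivation.map_smul, Derivation.map_smul,
      mul_smul_comm, mul_smul_comm, ← smul_sub]
    congr 1
    rw [map_sum, map_sum, Finset.mul_sum, Finset.mul_sum, ← Finset.sum_sub_distrib]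
    refine Finset.sum_congr rfl fun k _ => ?_
    rw [Derivation.map_smul, Derivation.map_smul, mul_smul_comm, mul_smul_comm,
      ← smul_sub, keyXm]
  have step2 : Complex.I • Xm (Ypoly a b c d) =
      Cc a b c d •
        ((∑ k ∈ Finset.Icc (c-a) (min c b),
            (cf a b c k * ((c-k:ℕ):ℂ)) • mono (a+k-c) (c-k-1) (k+1) (b-k)) -
         (∑ k ∈ Finset.Icc (c-a) (min c b),
            (cf a b c k * ((a+k-c:ℕ):ℂ)) • mono (a+k-c-1) (c-k) k (b-k+1))) := by
    rw [step1]
    congr 1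
    rw [← Finset.sum_sub_distrib]
    refine Finset.sum_congr rfl fun k _ => ?_
    rw [smul_sub, smul_smul, smul_smul]
  have T1 : (∑ k ∈ Finset.Icc (c-a) (min c b),
        (cf a b c k * ((c-k:ℕ):ℂ)) • mono (a+k-c) (c-k-1) (k+1) (b-k)) =
      ∑ k ∈ Finset.range (b+2),
        (if k ∈ Finset.Icc (c-a+1) (min c b + 1) then
          (cf a b c (k-1) * ((c-(k-1):ℕ):ℂ)) • mono (a-1+k-c) (c-k) k (b+1-k) else 0) := by
    rw [toRange (b+1) _ hIsub]
    conv_rhs => rw [Finset.sum_range_succ']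
    have h0 : (if 0 ∈ Finset.Icc (c-a+1) (min c b + 1) then
        (cf a b c (0-1) * ((c-(0-1):ℕ):ℂ)) • mono (a-1+0-c) (c-0) 0 (b+1-0) else 0) = 0 := by
      rw [if_neg]; simp only [Finset.mem_Icc]; omega
    rw [h0, add_zero]
    refine Finset.sum_congr rfl fun k hk => ?_
    by_cases h : k ∈ Finset.Icc (c-a) (min c b)
    · rw [if_pos h, if_pos (by rw [Finset.mem_Icc] at h ⊢; omega)]
      rw [Finset.mem_Icc] at h
      have e0 : k+1-1 = k := by omega
      have e1 : a-1+(k+1)-c = a+k-c := by omega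
      have e2 : c-(k+1) = c-k-1 := by omega
      have e3 : b+1-(k+1) = b-k := by omega
      rw [e0, e1, e2, e3]
    · rw [if_neg h, if_neg (by rw [Finset.mem_Icc] at h ⊢; omega)]
  have T2 : (∑ k ∈ Finset.Icc (c-a) (min c b),
        (cf a b c k * ((a+k-c:ℕ):ℂ)) • mono (a+k-c-1) (c-k) k (b-k+1)) =
      ∑ k ∈ Finset.range (b+2),
        (if k ∈ Finset.Icc (c-a) (min c b) then
          (cf a b c k * ((a+k-c:ℕ):ℂ)) • mono (a-1+k-c) (c-k) k (b+1-k) else 0) := by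
    rw [toRange (b+2) _ hIsub2]
    refine Finset.sum_congr rfl fun k hk => ?_
    split_ifs with h
    · rw [Finset.mem_Icc] at h
      have e1 : a+k-c-1 = a-1+k-c := by omega
      have e4 : b-k+1 = b+1-k := by omega
      rw [e1, e4]
    · rfl
  rw [step2, T1, T2, ← Finset.sum_sub_distrib, Finset.smul_sum]
  conv_rhs => rw [Ypoly_eq, smul_smul, toRange (b+2) _ hIsub', Finset.smul_sum]
  refine Finset.sum_congr rfl fun k hk => ?_
  rw [Finset.mem_range] at hk
  rw [ite_smul_zero, ite_smul_zero, ite_smul_zero, ← sub_smul, smul_smul, smul_smul]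
  congr 1
  rw [scalar2 a b c d k habcd ha (by omega), mul_assoc]

/-- ladder identities. With a = j+s, b = j−s, c = j+m, d = j−m:
if s < j (i.e. 1 ≤ b) then i·X₊Y^j_{sm} = √((j−s)(j+s+1))·Y^j_{s+1,m}, and
if s > −j (i.e. 1 ≤ a) then i·X₋Y^j_{sm} = √((j+s)(j−s+1))·Y^j_{s−1,m}. -/
theorem ladder_identities (a b c d : ℕ) (habcd : a + b = c + d) :
    (1 ≤ b →
      Complex.I • Xp (Ypoly a b c d) =
        ((Real.sqrt (b * (a + 1)) : ℝ) : ℂ) • Ypoly (a + 1) (b - 1) c d) ∧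
    (1 ≤ a →
      Complex.I • Xm (Ypoly a b c d) =
        ((Real.sqrt (a * (b + 1)) : ℝ) : ℂ) • Ypoly (a - 1) (b + 1) c d) :=
  ⟨part1 a b c d habcd, part2 a b c d habcd⟩
end
end
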